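/- arXiv:2501.14361 — 2 statements merged into one kernel-verified Lean document; each statement's English description precedes it below -/
import Mathlib

section
/- If μ₁ and μ₂ are two positive σ-finite measures on a measurable space X, both absolutely continuous with respect to σ-finite measures ν and ν', then the measure defined by A ↦ ∫_A √((dμ₁/dν)(x)·(dμ₂/dν)(x)) dν(x) equals the measure A ↦ ∫_A √((dμ₁/dν')(x)·(dμ₂/dν')(x)) dν'(x). In other words, the geometric-mean measure √(μ₁μ₂) is independent of the choice of dominating reference measure. -/
open MeasureTheory

lemma geomMean_aux {X : Type*} [MeasurableSpace X]
    (μ₁ μ₂ ν ξ : Measure X) [SigmaFinite μ₁] [SigmaFinite μ₂]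
    [SigmaFinite ν] [SigmaFinite ξ]
    (h₁ : μ₁ ≪ ν) (h₂ : μ₂ ≪ ν) (hν : ν ≪ ξ) :
    ξ.withDensity (fun x => (μ₁.rnDeriv ξ x * μ₂.rnDeriv ξ x) ^ (1/2 : ℝ))
      = ν.withDensity (fun x => (μ₁.rnDeriv ν x * μ₂.rnDeriv ν x) ^ (1/2 : ℝ)) := by
  have hc₁ := Measure.rnDeriv_mul_rnDeriv (κ := ξ) h₁
  have hc₂ := Measure.rnDeriv_mul_rnDeriv (κ := ξ) h₂
  have hcongr : (fun x => (μ₁.rnDeriv ξ x * μ₂.rnDeriv ξ x) ^ (1/2 : ℝ))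
      =ᵐ[ξ] fun x => ν.rnDeriv ξ x * (μ₁.rnDeriv ν x * μ₂.rnDeriv ν x) ^ (1/2 : ℝ) := by
    filter_upwards [hc₁, hc₂] with x hx₁ hx₂
    rw [← hx₁, ← hx₂]
    simp only [Pi.mul_apply]
    set a := μ₁.rnDeriv ν x
    set b := μ₂.rnDeriv ν x
    set c := ν.rnDeriv ξ x
    have : a * c * (b * c) = (a * b) * c ^ (2 : ℝ) := by
      rw [ENNReal.rpow_two]; ring
    rw [this, ENNReal.mul_rpow_of_nonneg _ _ (by norm_num : (0:ℝ) ≤ 1/2),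
      ← ENNReal.rpow_mul]
    norm_num [mul_comm]
  rw [withDensity_congr_ae hcongr,
    show (fun x => ν.rnDeriv ξ x * (μ₁.rnDeriv ν x * μ₂.rnDeriv ν x) ^ (1/2 : ℝ))
      = (ν.rnDeriv ξ * fun x => (μ₁.rnDeriv ν x * μ₂.rnDeriv ν x) ^ (1/2 : ℝ)) from rfl,
    withDensity_mul _ (Measure.measurable_rnDeriv _ _)
      (show Measurable fun x => (μ₁.rnDeriv ν x * μ₂.rnDeriv ν x) ^ (1/2 : ℝ) from
        ((Measure.measurable_rnDeriv _ _).mul (Measure.measurable_rnDeriv _ _)).pow_const ((1:ℝ)/2)),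
    Measure.withDensity_rnDeriv_eq _ _ hν]

/-- The geometric-mean measure `√(μ₁μ₂)` does not depend on the choice of the
dominating σ-finite reference measure. -/
theorem geomMean_measure_indep_of_ref {X : Type*} [MeasurableSpace X]
    (μ₁ μ₂ ν ν' : Measure X) [SigmaFinite μ₁] [SigmaFinite μ₂]
    [SigmaFinite ν] [SigmaFinite ν']
    (h₁ : μ₁ ≪ ν) (h₂ : μ₂ ≪ ν) (h₁' : μ₁ ≪ ν') (h₂' : μ₂ ≪ ν') :
    ν.withDensity (fun x => (μ₁.rnDeriv ν x * μ₂.rnDeriv ν x) ^ (1/2 : ℝ))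
      = ν'.withDensity (fun x => (μ₁.rnDeriv ν' x * μ₂.rnDeriv ν' x) ^ (1/2 : ℝ)) := by
  rw [← geomMean_aux μ₁ μ₂ ν (ν + ν') h₁ h₂ (Measure.absolutelyContinuous_of_le (Measure.le_add_right le_rfl)),
    ← geomMean_aux μ₁ μ₂ ν' (ν + ν') h₁' h₂' (Measure.absolutelyContinuous_of_le (Measure.le_add_left le_rfl))]
end

section
/- The geometric-mean measure tensorizes: for σ-finite measures μ₁, μ₂ on X and ν₁, ν₂ on Y, one has √((μ₁⊗ν₁)(μ₂⊗ν₂)) = √(μ₁μ₂) ⊗ √(ν₁ν₂) as measures on X × Y. -/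
open MeasureTheory
open scoped ENNReal

lemma measurable_rpow_half {α : Type*} [MeasurableSpace α] {f : α → ℝ≥0∞}
    (hf : Measurable f) : Measurable fun x => f x ^ (1/2 : ℝ) :=
  ENNReal.continuous_rpow_const.measurable.comp hf

/-- The geometric-mean measure of `μ₁` and `μ₂`, defined using the reference
measure `μ₁ + μ₂`. -/
noncomputable def geomMeanMeasure {X : Type*} [MeasurableSpace X]
    (μ₁ μ₂ : Measure X) : Measure X :=
  (μ₁ + μ₂).withDensity
    (fun x => (μ₁.rnDeriv (μ₁ + μ₂) x * μ₂.rnDeriv (μ₁ + μ₂) x) ^ (1/2 : ℝ))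

lemma sq_rpow_half (c : ℝ≥0∞) : (c * c) ^ (1/2 : ℝ) = c := by
  rw [← pow_two, ← ENNReal.rpow_natCast, ← ENNReal.rpow_mul,
    show ((2:ℕ):ℝ) * (1/2) = 1 by norm_num, ENNReal.rpow_one]

lemma sqrt_mul_le_add (a b : ℝ≥0∞) : (a * b) ^ (1/2 : ℝ) ≤ a + b := by
  calc (a * b) ^ (1/2 : ℝ) ≤ ((a + b) * (a + b)) ^ (1/2 : ℝ) := by
        apply ENNReal.rpow_le_rpow _ (by norm_num)
        exact mul_le_mul' le_self_add le_add_self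
    _ = a + b := sq_rpow_half _

lemma geomMean_le {X : Type*} [MeasurableSpace X] (μ₁ μ₂ : Measure X) :
    geomMeanMeasure μ₁ μ₂ ≤ μ₁ + μ₂ := by
  calc geomMeanMeasure μ₁ μ₂
      ≤ (μ₁ + μ₂).withDensity
        (fun x => μ₁.rnDeriv (μ₁ + μ₂) x + μ₂.rnDeriv (μ₁ + μ₂) x) :=
        withDensity_mono (Filter.Eventually.of_forall fun x => sqrt_mul_le_add _ _)
    _ = (μ₁ + μ₂).withDensity (μ₁.rnDeriv (μ₁ + μ₂))
        + (μ₁ + μ₂).withDensity (μ₂.rnDeriv (μ₁ + μ₂)) :=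
        withDensity_add_left (Measure.measurable_rnDeriv _ _) _
    _ ≤ μ₁ + μ₂ :=
        add_le_add (Measure.withDensity_rnDeriv_le _ _) (Measure.withDensity_rnDeriv_le _ _)

instance geomMean_sigmaFinite {X : Type*} [MeasurableSpace X] (μ₁ μ₂ : Measure X)
    [SigmaFinite μ₁] [SigmaFinite μ₂] : SigmaFinite (geomMeanMeasure μ₁ μ₂) :=
  Measure.sigmaFinite_of_le _ (geomMean_le μ₁ μ₂)

/-- The geometric-mean measure can be computed with respect to any σ-finite dominating
measure. -/
lemma geomMean_eq_withDensity {X : Type*} [MeasurableSpace X] (μ₁ μ₂ ν : Measure X)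
    [SigmaFinite μ₁] [SigmaFinite μ₂] [SigmaFinite ν] (h₁ : μ₁ ≪ ν) (h₂ : μ₂ ≪ ν) :
    geomMeanMeasure μ₁ μ₂
      = ν.withDensity (fun x => (μ₁.rnDeriv ν x * μ₂.rnDeriv ν x) ^ (1/2 : ℝ)) := by
  set ρ := μ₁ + μ₂ with hρ
  have hρν : ρ ≪ ν := Measure.AbsolutelyContinuous.add_left_iff.mpr ⟨h₁, h₂⟩
  have hm₁ : μ₁ ≪ ρ := Measure.absolutelyContinuous_of_le (Measure.le_add_right le_rfl)
  have hm₂ : μ₂ ≪ ρ := Measure.absolutelyContinuous_of_le (Measure.le_add_left le_rfl)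
  have e₁ := Measure.rnDeriv_mul_rnDeriv (ν := ρ) (κ := ν) hm₁
  have e₂ := Measure.rnDeriv_mul_rnDeriv (ν := ρ) (κ := ν) hm₂
  have hcongr : (fun x => (μ₁.rnDeriv ν x * μ₂.rnDeriv ν x) ^ (1/2 : ℝ))
      =ᵐ[ν] fun x => ρ.rnDeriv ν x
        * (μ₁.rnDeriv ρ x * μ₂.rnDeriv ρ x) ^ (1/2 : ℝ) := by
    filter_upwards [e₁, e₂] with x hx₁ hx₂
    simp only [Pi.mul_apply] at hx₁ hx₂
    rw [← hx₁, ← hx₂]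
    rw [show μ₁.rnDeriv ρ x * ρ.rnDeriv ν x * (μ₂.rnDeriv ρ x * ρ.rnDeriv ν x)
        = (μ₁.rnDeriv ρ x * μ₂.rnDeriv ρ x) * (ρ.rnDeriv ν x * ρ.rnDeriv ν x) by ring]
    rw [ENNReal.mul_rpow_of_nonneg _ _ (by norm_num : (0:ℝ) ≤ 1/2), sq_rpow_half, mul_comm]
  rw [withDensity_congr_ae hcongr,
    show (fun x => ρ.rnDeriv ν x * (μ₁.rnDeriv ρ x * μ₂.rnDeriv ρ x) ^ (1/2 : ℝ))
      = ρ.rnDeriv ν * fun x => (μ₁.rnDeriv ρ x * μ₂.rnDeriv ρ x) ^ (1/2 : ℝ) from rfl,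
    withDensity_mul ν (Measure.measurable_rnDeriv _ _)
      (measurable_rpow_half (f := fun x => μ₁.rnDeriv ρ x * μ₂.rnDeriv ρ x) ((Measure.measurable_rnDeriv _ _).mul (Measure.measurable_rnDeriv _ _))),
    Measure.withDensity_rnDeriv_eq _ _ hρν]
  rfl

lemma withDensity_prod {X Y : Type*} [MeasurableSpace X] [MeasurableSpace Y]
    (μ : Measure X) (ν : Measure Y) [SigmaFinite μ] [SigmaFinite ν]
    {f : X → ℝ≥0∞} {g : Y → ℝ≥0∞} (hf : Measurable f) (hg : Measurable g)
    [SigmaFinite (μ.withDensity f)] [SigmaFinite (ν.withDensity g)] :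
    (μ.withDensity f).prod (ν.withDensity g)
      = (μ.prod ν).withDensity (fun z => f z.1 * g z.2) := by
  refine Measure.prod_eq fun s t hs ht => ?_
  rw [withDensity_apply _ (hs.prod ht), ← Measure.prod_restrict,
    MeasureTheory.lintegral_prod_mul hf.aemeasurable hg.aemeasurable,
    withDensity_apply _ hs, withDensity_apply _ ht]

lemma rnDeriv_prod_ae {X Y : Type*} [MeasurableSpace X] [MeasurableSpace Y]
    (μ ρ : Measure X) (ν σ : Measure Y)
    [SigmaFinite μ] [SigmaFinite ρ] [SigmaFinite ν] [SigmaFinite σ]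
    (hμ : μ ≪ ρ) (hν : ν ≪ σ) :
    (μ.prod ν).rnDeriv (ρ.prod σ)
      =ᵐ[ρ.prod σ] fun z => μ.rnDeriv ρ z.1 * ν.rnDeriv σ z.2 := by
  haveI : SigmaFinite (ρ.withDensity (μ.rnDeriv ρ)) := by
    rw [Measure.withDensity_rnDeriv_eq _ _ hμ]; infer_instance
  haveI : SigmaFinite (σ.withDensity (ν.rnDeriv σ)) := by
    rw [Measure.withDensity_rnDeriv_eq _ _ hν]; infer_instance
  have h : μ.prod ν = (ρ.prod σ).withDensity (fun z => μ.rnDeriv ρ z.1 * ν.rnDeriv σ z.2) :=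
    calc μ.prod ν
        = (ρ.withDensity (μ.rnDeriv ρ)).prod (σ.withDensity (ν.rnDeriv σ)) := by
          rw [Measure.withDensity_rnDeriv_eq _ _ hμ, Measure.withDensity_rnDeriv_eq _ _ hν]
      _ = (ρ.prod σ).withDensity (fun z => μ.rnDeriv ρ z.1 * ν.rnDeriv σ z.2) :=
          withDensity_prod _ _ (Measure.measurable_rnDeriv _ _) (Measure.measurable_rnDeriv _ _)
  rw [h]
  exact Measure.rnDeriv_withDensity _
    ((Measure.measurable_rnDeriv _ _).comp measurable_fst |>.mul
      ((Measure.measurable_rnDeriv _ _).comp measurable_snd))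

/-- The geometric-mean measure tensorizes under products of measures. -/
theorem geomMeanMeasure_prod {X Y : Type*} [MeasurableSpace X] [MeasurableSpace Y]
    (μ₁ μ₂ : Measure X) (ν₁ ν₂ : Measure Y)
    [SigmaFinite μ₁] [SigmaFinite μ₂] [SigmaFinite ν₁] [SigmaFinite ν₂] :
    geomMeanMeasure (μ₁.prod ν₁) (μ₂.prod ν₂)
      = (geomMeanMeasure μ₁ μ₂).prod (geomMeanMeasure ν₁ ν₂) := by
  set ρ := μ₁ + μ₂ with hρdef
  set σ := ν₁ + ν₂ with hσdef
  have hm₁ : μ₁ ≪ ρ := Measure.absolutelyContinuous_of_le (Measure.le_add_right le_rfl)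
  have hm₂ : μ₂ ≪ ρ := Measure.absolutelyContinuous_of_le (Measure.le_add_left le_rfl)
  have hn₁ : ν₁ ≪ σ := Measure.absolutelyContinuous_of_le (Measure.le_add_right le_rfl)
  have hn₂ : ν₂ ≪ σ := Measure.absolutelyContinuous_of_le (Measure.le_add_left le_rfl)
  have h₁ : μ₁.prod ν₁ ≪ ρ.prod σ := hm₁.prod hn₁
  have h₂ : μ₂.prod ν₂ ≪ ρ.prod σ := hm₂.prod hn₂
  rw [geomMean_eq_withDensity (μ₁.prod ν₁) (μ₂.prod ν₂) (ρ.prod σ) h₁ h₂]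
  have hgX : SigmaFinite (ρ.withDensity
      (fun x => (μ₁.rnDeriv ρ x * μ₂.rnDeriv ρ x) ^ (1/2 : ℝ))) :=
    geomMean_sigmaFinite μ₁ μ₂
  have hgY : SigmaFinite (σ.withDensity
      (fun y => (ν₁.rnDeriv σ y * ν₂.rnDeriv σ y) ^ (1/2 : ℝ))) :=
    geomMean_sigmaFinite ν₁ ν₂
  have hRHS : (geomMeanMeasure μ₁ μ₂).prod (geomMeanMeasure ν₁ ν₂)
      = (ρ.prod σ).withDensity (fun z =>
          (μ₁.rnDeriv ρ z.1 * μ₂.rnDeriv ρ z.1) ^ (1/2 : ℝ)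
          * (ν₁.rnDeriv σ z.2 * ν₂.rnDeriv σ z.2) ^ (1/2 : ℝ)) := by
    exact withDensity_prod ρ σ
      (measurable_rpow_half ((Measure.measurable_rnDeriv _ _).mul (Measure.measurable_rnDeriv _ _)))
      (measurable_rpow_half ((Measure.measurable_rnDeriv _ _).mul (Measure.measurable_rnDeriv _ _)))
  rw [hRHS]
  apply withDensity_congr_ae
  filter_upwards [rnDeriv_prod_ae μ₁ ρ ν₁ σ hm₁ hn₁, rnDeriv_prod_ae μ₂ ρ ν₂ σ hm₂ hn₂]
    with z hz₁ hz₂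
  rw [hz₁, hz₂, ← ENNReal.mul_rpow_of_nonneg _ _ (by norm_num : (0:ℝ) ≤ 1/2)]
  ring_nf
end
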